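/- If G is a finite simple graph of order n with domination number γ(G) ≥ 2, then the number of edges of G is at most ⌊(n − γ(G))(n − γ(G) + 2)/2⌋. -/

import Mathlib

/-- A finite set of vertices `D` is a dominating set of `G` if every vertex
is in `D` or adjacent to a vertex in `D`. -/
def SimpleGraph.IsDominatingSet {V : Type*} (G : SimpleGraph V) (D : Finset V) : Prop :=
  ∀ v : V, v ∈ D ∨ ∃ u ∈ D, G.Adj u v

/-- The domination number of `G`: the minimum cardinality of a dominating set. -/
noncomputable def SimpleGraph.domNum {V : Type*} (G : SimpleGraph V) : ℕ :=
  sInf {n : ℕ | ∃ D : Finset V, G.IsDominatingSet D ∧ D.card = n}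

/-- The `k`-synchronous bondage number of `G`: the minimum cardinality of a set of edges
whose deletion increases the domination number by exactly `k`.  (`Sb 1` is the classical
bondage number.) -/
noncomputable def SimpleGraph.synchBondage {V : Type*} (G : SimpleGraph V) (k : ℕ) : ℕ :=
  sInf {m : ℕ | ∃ E' : Finset (Sym2 V), ↑E' ⊆ G.edgeSet ∧
    (G.deleteEdges ↑E').domNum = G.domNum + k ∧ E'.card = m}

/-!
Vizing's argument, by induction on the order `n`. Put `k = n - γ(G)`. Deleting the neighbourhood
of a vertex from `V` leaves a dominating set, so every degree is at most `k`. Fix a vertex `v` of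
degree `d` and let `H` be the graph induced on the complement of its closed neighbourhood `N[v]`;
adding `v` to a dominating set of `H` dominates `G`, so `|H| - γ(H) ≤ k - d` and by induction
`2|E(H)| ≤ (k - d)(k - d + 2)`. For a neighbour `x` of `v`, deleting `(N(v) \ {x}) ∪ (N(x) \ N[v])`
from `V` again leaves a dominating set, so `x` has at most `k + 1 - d` neighbours outside `N[v]`.
Summing degrees, `2|E(G)| ≤ (k - d)(k - d + 2) + d + d(2k + 1 - d) = k(k + 2)`.
-/

open Finset

namespace SimpleGraph

variable {V : Type*} {G : SimpleGraph V}

theorem domNum_le_card {D : Finset V} (hD : G.IsDominatingSet D) : G.domNum ≤ #D :=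
  Nat.sInf_le ⟨D, hD, rfl⟩

section Fintype

variable [Fintype V]

theorem isDominatingSet_univ : G.IsDominatingSet univ := fun v => Or.inl (mem_univ v)

theorem exists_isDominatingSet_card_eq_domNum :
    ∃ D : Finset V, G.IsDominatingSet D ∧ #D = G.domNum :=
  Nat.sInf_mem (s := {n | ∃ D : Finset V, G.IsDominatingSet D ∧ #D = n})
    ⟨_, univ, isDominatingSet_univ, rfl⟩

variable [DecidableEq V]

theorem domNum_add_card_le_of_forall_exists_adj {T : Finset V}
    (hT : ∀ v ∈ T, ∃ u ∉ T, G.Adj u v) : G.domNum + #T ≤ Fintype.card V := by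
  have hdom : G.IsDominatingSet Tᶜ := fun v => by
    by_cases hv : v ∈ T
    · obtain ⟨u, hu, huv⟩ := hT v hv
      exact Or.inr ⟨u, mem_compl.2 hu, huv⟩
    · exact Or.inl (mem_compl.2 hv)
  have := domNum_le_card hdom
  rw [card_compl] at this
  have := card_le_univ T
  omega

variable [DecidableRel G.Adj]

theorem degree_add_domNum_le (v : V) : G.degree v + G.domNum ≤ Fintype.card V := by
  have := domNum_add_card_le_of_forall_exists_adj (G := G) (T := G.neighborFinset v)
    fun u hu => ⟨v, by simp, (G.mem_neighborFinset v u).1 hu⟩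
  rw [card_neighborFinset_eq_degree] at this
  omega

variable (G) in
def closedNeighborFinset (v : V) : Finset V := insert v (G.neighborFinset v)

theorem mem_closedNeighborFinset {v u : V} :
    u ∈ G.closedNeighborFinset v ↔ u = v ∨ G.Adj v u := by
  simp [closedNeighborFinset]

theorem card_closedNeighborFinset (v : V) : #(G.closedNeighborFinset v) = G.degree v + 1 := by
  rw [closedNeighborFinset, card_insert_of_notMem (by simp), card_neighborFinset_eq_degree]

theorem card_neighborFinset_inter_compl_add_degree_add_domNum_le {v x : V} (hvx : G.Adj v x) :
    #(G.neighborFinset x ∩ (G.closedNeighborFinset v)ᶜ) + G.degree v + G.domNum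
      ≤ Fintype.card V + 1 := by
  set B := G.neighborFinset x ∩ (G.closedNeighborFinset v)ᶜ
  have hdisj : Disjoint ((G.neighborFinset v).erase x) B := by
    rw [Finset.disjoint_left]
    intro u hu hu'
    simp [B, mem_closedNeighborFinset] at hu hu'
    tauto
  have hT : ∀ u ∈ (G.neighborFinset v).erase x ∪ B,
      ∃ w ∉ (G.neighborFinset v).erase x ∪ B, G.Adj w u := by
    intro u hu
    rcases mem_union.1 hu with h | h
    · exact ⟨v, by simp [B, mem_closedNeighborFinset], by simp at h; exact h.2⟩
    · exact ⟨x, by simp [B], by simp [B] at h; exact h.1⟩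
  have := domNum_add_card_le_of_forall_exists_adj hT
  rw [card_union_of_disjoint hdisj, card_erase_of_mem ((G.mem_neighborFinset v x).2 hvx),
    card_neighborFinset_eq_degree] at this
  have : 0 < G.degree v := G.degree_pos_iff_exists_adj v |>.2 ⟨x, hvx⟩
  omega

theorem degree_induce (s : Finset V) (u : (s : Set V)) :
    (G.induce (s : Set V)).degree u = #(G.neighborFinset u ∩ s) := by
  rw [← card_neighborFinset_eq_degree, ← card_map (Function.Embedding.subtype _)]
  congr 1
  ext
  simp

theorem sum_card_neighborFinset_inter_comm (s t : Finset V) :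
    ∑ u ∈ s, #(G.neighborFinset u ∩ t) = ∑ x ∈ t, #(G.neighborFinset x ∩ s) := by
  have hfilter : ∀ u (r : Finset V), G.neighborFinset u ∩ r = r.filter (G.Adj u) :=
    fun u r => by ext; simp [and_comm]
  simp_rw [hfilter]
  refine (sum_card_bipartiteAbove_eq_sum_card_bipartiteBelow G.Adj).trans
    (sum_congr rfl fun x _ => ?_)
  congr 1
  ext u
  simp [Finset.bipartiteBelow, G.adj_comm u x]

theorem sum_degree_eq_two_mul_card_edgeFinset_induce_add (s : Finset V) :
    ∑ u ∈ s, G.degree u =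
      2 * #(G.induce (s : Set V)).edgeFinset + ∑ x ∈ sᶜ, #(G.neighborFinset x ∩ s) := by
  have hsplit : ∀ u, G.degree u = #(G.neighborFinset u ∩ s) + #(G.neighborFinset u ∩ sᶜ) :=
    fun u => by
      rw [← sdiff_eq_inter_compl, card_inter_add_card_sdiff, card_neighborFinset_eq_degree]
  have hinduce : ∑ u ∈ s, #(G.neighborFinset u ∩ s) = 2 * #(G.induce (s : Set V)).edgeFinset := by
    rw [← sum_degrees_eq_twice_card_edges]
    simp_rw [degree_induce]
    exact (sum_coe_sort s _).symm
  rw [sum_congr rfl fun u _ => hsplit u, sum_add_distrib, hinduce,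
    sum_card_neighborFinset_inter_comm]

theorem two_mul_card_edgeFinset_eq (v : V) :
    2 * #G.edgeFinset =
      2 * #(G.induce ↑(G.closedNeighborFinset v)ᶜ).edgeFinset + G.degree v +
        ∑ x ∈ G.neighborFinset v,
          (#(G.neighborFinset x ∩ (G.closedNeighborFinset v)ᶜ) + G.degree x) := by
  rw [← sum_degrees_eq_twice_card_edges, ← sum_add_sum_compl (G.closedNeighborFinset v)ᶜ,
    sum_degree_eq_two_mul_card_edgeFinset_induce_add, compl_compl, add_assoc, ← sum_add_distrib,
    closedNeighborFinset, sum_insert (by simp)]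
  have : G.neighborFinset v ∩ (insert v (G.neighborFinset v))ᶜ = ∅ := by
    ext; simp +contextual
  rw [this, card_empty, zero_add, add_assoc]

theorem domNum_le_domNum_induce_compl_closedNeighborFinset_add_one (v : V) :
    G.domNum ≤ (G.induce ↑(G.closedNeighborFinset v)ᶜ).domNum + 1 := by
  obtain ⟨D, hD, hcard⟩ :=
    (G.induce ↑(G.closedNeighborFinset v)ᶜ).exists_isDominatingSet_card_eq_domNum
  have hdom : G.IsDominatingSet (insert v (D.map (Function.Embedding.subtype _))) := by
    intro u
    by_cases hu : u ∈ G.closedNeighborFinset v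
    · rcases mem_closedNeighborFinset.1 hu with rfl | h
      · exact Or.inl (mem_insert_self _ _)
      · exact Or.inr ⟨v, mem_insert_self _ _, h⟩
    · rcases hD ⟨u, by simpa using hu⟩ with h | ⟨w, hw, hwu⟩
      · exact Or.inl (mem_insert_of_mem (mem_map_of_mem _ h))
      · exact Or.inr ⟨w, mem_insert_of_mem (mem_map_of_mem _ hw), hwu⟩
  calc G.domNum ≤ #(insert v (D.map (Function.Embedding.subtype _))) := domNum_le_card hdom
    _ ≤ #D + 1 := by grw [card_insert_le, card_map]
    _ = _ := by rw [hcard]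

theorem card_compl_closedNeighborFinset_add_degree_add_one (v : V) :
    Fintype.card ↑(↑(G.closedNeighborFinset v)ᶜ : Set V) + G.degree v + 1 = Fintype.card V := by
  rw [show Fintype.card ↑(↑(G.closedNeighborFinset v)ᶜ : Set V) = #(G.closedNeighborFinset v)ᶜ
    from Fintype.card_coe _, add_assoc, ← card_closedNeighborFinset, card_compl_add_card]

end Fintype

variable (G) in
theorem two_mul_card_edgeFinset_le [Fintype V] [DecidableRel G.Adj] :
    2 * #G.edgeFinset ≤ (Fintype.card V - G.domNum) * (Fintype.card V - G.domNum + 2) := by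
  classical
  induction hn : Fintype.card V using Nat.strong_induction_on generalizing V with
  | _ n ih =>
  rcases isEmpty_or_nonempty V with _ | ⟨⟨v⟩⟩
  · rw [← sum_degrees_eq_twice_card_edges]
    simp
  have hcardH := G.card_compl_closedNeighborFinset_add_degree_add_one v
  have hdomH := G.domNum_le_domNum_induce_compl_closedNeighborFinset_add_one v
  have hH := ih _ (by omega) (G.induce ↑(G.closedNeighborFinset v)ᶜ) rfl
  obtain ⟨j, hj⟩ : ∃ j, n - G.domNum = G.degree v + j :=
    ⟨n - G.domNum - G.degree v, by have := G.degree_add_domNum_le v; omega⟩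
  have hjH : Fintype.card ↑(↑(G.closedNeighborFinset v)ᶜ : Set V)
      - (G.induce ↑(G.closedNeighborFinset v)ᶜ).domNum ≤ j := by omega
  replace hH := hH.trans (Nat.mul_le_mul hjH (Nat.add_le_add_right hjH 2))
  have hsum := sum_le_card_nsmul (G.neighborFinset v)
    (fun x => #(G.neighborFinset x ∩ (G.closedNeighborFinset v)ᶜ) + G.degree x + G.degree v)
    (2 * (G.degree v + j) + 1) fun x hx => by
      have := G.card_neighborFinset_inter_compl_add_degree_add_domNum_le
        ((G.mem_neighborFinset v x).1 hx)
      have := G.degree_add_domNum_le x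
      omega
  rw [sum_add_distrib, sum_const, card_neighborFinset_eq_degree, smul_eq_mul, smul_eq_mul] at hsum
  rw [G.two_mul_card_edgeFinset_eq v, hj]
  nlinarith

end SimpleGraph

theorem card_edges_le_of_domNum_general {V : Type*} [Fintype V]
    (G : SimpleGraph V) [DecidableRel G.Adj] :
    G.edgeFinset.card ≤
      (Fintype.card V - G.domNum) * (Fintype.card V - G.domNum + 2) / 2 := by
  have := G.two_mul_card_edgeFinset_le
  omega

/-- Vizing: a graph of order `n` with domination number `γ ≥ 2` has at most
`⌊(n − γ)(n − γ + 2)/2⌋` edges. -/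
theorem card_edges_le_of_domNum {V : Type*} [Fintype V] [DecidableEq V]
    (G : SimpleGraph V) [DecidableRel G.Adj] (h : 2 ≤ G.domNum) :
    G.edgeFinset.card ≤
      (Fintype.card V - G.domNum) * (Fintype.card V - G.domNum + 2) / 2 :=
  card_edges_le_of_domNum_general G
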